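/- If a finite-dimensional solvable Lie algebra over an algebraically closed field of characteristic zero admits an invertible Leibniz-derivation of some order k ≥ 1, then it is nilpotent. -/

import Mathlib

/-!
The Leibniz rule makes nested brackets additive in generalized eigenvalues of `P`: if `v` and `w`
are generalized eigenvectors of `P` for `μ` and `γ`, then `(ad v)^k w` is one for `k μ + γ`.
As `P` is invertible, `μ ≠ 0`, so the iterates `(ad v)^(k j) w` run through generalized
eigenspaces for the infinitely many values `γ + j k μ`; `P` has only finitely many eigenvalues,
so `ad v` is nilpotent, and `L` is spanned by `ad`-nilpotent elements.

By Lie's theorem, a finite-dimensional module of a solvable Lie algebra has a common eigenvector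
with a linear weight. The weight vanishes on elements acting nilpotently, hence on their span, so
the module has a nonzero trivial submodule, and induction on the dimension shows that the action
is nilpotent.
-/

open Finset

/-- Right-nested bracket `[x₁,[x₂,…,[x_k,x_{k+1}]…]]` of a list of elements. -/
def nestedBracket {L : Type*} [LieRing L] : List L → L
  | [] => 0
  | [x] => x
  | x :: xs => ⁅x, nestedBracket xs⁆

/-- A Leibniz-derivation of order `k` of a Lie algebra. -/
def IsLeibnizDerivation {F L : Type*} [CommRing F] [LieRing L] [LieAlgebra F L] (k : ℕ)
    (P : L →ₗ[F] L) : Prop :=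
  ∀ x : Fin (k + 1) → L,
    P (nestedBracket (List.ofFn x)) =
      ∑ i : Fin (k + 1), nestedBracket (List.ofFn (Function.update x i (P (x i))))

namespace MultilinearMap

variable {R ι M N : Type*} [CommRing R] [Fintype ι] [DecidableEq ι] [AddCommGroup M] [Module R M]
  [AddCommGroup N] [Module R N] (f : MultilinearMap R (fun _ : ι => M) N)
  {P : Module.End R M} {D : Module.End R N}

theorem sub_smul_apply_eq_sum_of_leibniz
    (hD : ∀ x, D (f x) = ∑ i, f (Function.update x i (P (x i)))) (α : ι → R)
    (x : ι → M) :
    (D - (∑ i, α i) • 1) (f x) = ∑ i, f (Function.update x i ((P - α i • 1) (x i))) := by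
  simp [f.map_update_sub, f.map_update_smul, hD, Finset.sum_sub_distrib, Finset.sum_smul]

theorem pow_sub_smul_apply_eq_zero_of_leibniz
    (hD : ∀ x, D (f x) = ∑ i, f (Function.update x i (P (x i)))) (α : ι → R)
    {d : ι → ℕ} {x : ι → M} (hx : ∀ i, ((P - α i • 1) ^ d i) (x i) = 0) :
    ((D - (∑ i, α i) • 1) ^ (∑ i, d i + 1)) (f x) = 0 := by
  induction hn : ∑ i, d i using Nat.strong_induction_on generalizing d x with | _ n ih =>
  rw [pow_succ, Module.End.mul_apply, f.sub_smul_apply_eq_sum_of_leibniz hD, _root_.map_sum]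
  refine Finset.sum_eq_zero fun i _ => ?_
  have hsum := Finset.add_sum_erase Finset.univ d (Finset.mem_univ i)
  obtain hi | hi := Nat.eq_zero_or_pos (d i)
  · have : x i = 0 := by simpa [hi] using hx i
    simp [this, f.map_update_zero]
  obtain ⟨m, rfl⟩ : ∃ m, n = m + 1 := Nat.exists_eq_succ_of_ne_zero (by omega)
  refine ih m (by omega) (d := Function.update d i (d i - 1)) (fun j => ?_) ?_
  · rcases eq_or_ne j i with rfl | hj
    · rw [Function.update_self, Function.update_self, ← Module.End.mul_apply, ← pow_succ,
        Nat.sub_add_cancel hi, hx]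
    · simp [hj, hx j]
  · rw [Finset.sum_update_of_mem (Finset.mem_univ i), Finset.sdiff_singleton_eq_erase]
    omega

theorem apply_mem_maxGenEigenspace_sum_of_leibniz
    (hD : ∀ x, D (f x) = ∑ i, f (Function.update x i (P (x i)))) {α : ι → R} {x : ι → M}
    (hx : ∀ i, x i ∈ P.maxGenEigenspace (α i)) :
    f x ∈ D.maxGenEigenspace (∑ i, α i) := by
  choose d hd using fun i => (P.mem_maxGenEigenspace _ _).mp (hx i)
  exact (D.mem_maxGenEigenspace _ _).mpr ⟨_, f.pow_sub_smul_apply_eq_zero_of_leibniz hD α hd⟩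

end MultilinearMap

section NestedBracket

variable (F L : Type*) [CommRing F] [LieRing L] [LieAlgebra F L]

def nestedBracketMultilinear : (n : ℕ) → MultilinearMap F (fun _ : Fin (n + 1) => L) L
  | 0 => MultilinearMap.ofSubsingleton F L L (0 : Fin 1) LinearMap.id
  | n + 1 => LinearMap.uncurryLeft
      { toFun := fun x => (LieAlgebra.ad F L x).compMultilinearMap (nestedBracketMultilinear n)
        map_add' := fun _ _ => by ext; simp
        map_smul' := fun _ _ => by ext; simp }

variable {F L}

theorem nestedBracket_cons {x : L} {l : List L} (hl : l ≠ []) :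
    nestedBracket (x :: l) = ⁅x, nestedBracket l⁆ := by
  cases l with
  | nil => exact absurd rfl hl
  | cons => rfl

theorem nestedBracketMultilinear_apply {n : ℕ} (x : Fin (n + 1) → L) :
    nestedBracketMultilinear F L n x = nestedBracket (List.ofFn x) := by
  induction n with
  | zero => rfl
  | succ n ih =>
    rw [List.ofFn_succ, nestedBracket_cons (by simp), ← ih]
    rfl

theorem nestedBracket_replicate_append (v w : L) (k : ℕ) :
    nestedBracket (List.replicate k v ++ [w]) = (LieAlgebra.ad F L v ^ k) w := by
  induction k with
  | zero => rfl
  | succ k ih =>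
    rw [List.replicate_succ, List.cons_append, nestedBracket_cons (by simp), ih, pow_succ',
      Module.End.mul_apply, LieAlgebra.ad_apply]

theorem nestedBracket_ofFn_snoc (v w : L) (k : ℕ) :
    nestedBracket (List.ofFn (Fin.snoc (fun _ : Fin k => v) w)) = (LieAlgebra.ad F L v ^ k) w := by
  rw [List.ofFn_succ', ← nestedBracket_replicate_append (F := F)]
  simp

end NestedBracket

section Leibniz

variable {F L : Type*} [Field F] [LieRing L] [LieAlgebra F L] {k : ℕ} {P : Module.End F L}

theorem IsLeibnizDerivation.map_nestedBracketMultilinear (hP : IsLeibnizDerivation k P)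
    (x : Fin (k + 1) → L) :
    P (nestedBracketMultilinear F L k x) =
      ∑ i, nestedBracketMultilinear F L k (Function.update x i (P (x i))) := by
  simpa only [nestedBracketMultilinear_apply] using hP x

theorem IsLeibnizDerivation.pow_ad_mem_maxGenEigenspace (hP : IsLeibnizDerivation k P)
    {μ γ : F} {v w : L} (hv : v ∈ P.maxGenEigenspace μ) (hw : w ∈ P.maxGenEigenspace γ) :
    (LieAlgebra.ad F L v ^ k) w ∈ P.maxGenEigenspace (k * μ + γ) := by
  have hx (i : Fin (k + 1)) : (Fin.snoc (fun _ => v) w : Fin (k + 1) → L) i ∈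
      P.maxGenEigenspace ((Fin.snoc (fun _ => μ) γ : Fin (k + 1) → F) i) := by
    induction i using Fin.lastCases with
    | last => simpa only [Fin.snoc_last] using hw
    | cast i => simpa only [Fin.snoc_castSucc] using hv
  have := (nestedBracketMultilinear F L k).apply_mem_maxGenEigenspace_sum_of_leibniz
    hP.map_nestedBracketMultilinear hx
  rw [nestedBracketMultilinear_apply, nestedBracket_ofFn_snoc (F := F)] at this
  convert this using 2
  simp [Fin.sum_univ_castSucc]

theorem IsLeibnizDerivation.pow_ad_mul_mem_maxGenEigenspace (hP : IsLeibnizDerivation k P)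
    {μ : F} {v : L} (hv : v ∈ P.maxGenEigenspace μ) (j : ℕ) {γ : F} {w : L}
    (hw : w ∈ P.maxGenEigenspace γ) :
    (LieAlgebra.ad F L v ^ (k * j)) w ∈ P.maxGenEigenspace (γ + j * (k * μ)) := by
  induction j generalizing γ w with
  | zero => simpa using hw
  | succ j ih =>
    rw [Nat.mul_succ, pow_add, Module.End.mul_apply,
      show γ + (j + 1 : ℕ) * (k * μ) = k * μ + γ + j * (k * μ) by push_cast; ring]
    exact ih (hP.pow_ad_mem_maxGenEigenspace hv hw)

theorem IsLeibnizDerivation.isNilpotent_ad_of_mem_maxGenEigenspace [CharZero F] [IsAlgClosed F]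
    [FiniteDimensional F L] (hk : k ≠ 0) (hP : IsLeibnizDerivation k P)
    (hinj : Function.Injective P) {μ : F} {v : L} (hv : v ∈ P.maxGenEigenspace μ) :
    IsNilpotent (LieAlgebra.ad F L v) := by
  rcases eq_or_ne μ 0 with rfl | hμ
  · obtain ⟨n, hn⟩ := (P.mem_maxGenEigenspace 0 v).mp hv
    have : v = 0 := hinj.iterate n (by simpa [Module.End.coe_pow] using hn)
    simp [this]
  have hδ : (k : F) * μ ≠ 0 := mul_ne_zero (Nat.cast_ne_zero.mpr hk) hμ
  have hfin := WellFoundedGT.finite_ne_bot_of_iSupIndep (Module.End.independent_genEigenspace P ⊤)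
  have hE (γ : F) : P.maxGenEigenspace γ ≤ (LieAlgebra.ad F L v).maxGenEigenspace 0 := by
    intro w hw
    obtain ⟨j, hj⟩ : ∃ j : ℕ, P.maxGenEigenspace (γ + j * (k * μ)) = ⊥ := by
      by_contra! h
      refine Set.infinite_range_of_injective (f := fun j : ℕ => γ + j * (k * μ)) ?_
        (hfin.subset (Set.range_subset_iff.2 h))
      intro a b hab
      simpa [hδ] using hab
    have := hP.pow_ad_mul_mem_maxGenEigenspace hv j hw
    rw [hj, Submodule.mem_bot] at this
    exact (Module.End.mem_maxGenEigenspace _ _ _).mpr ⟨k * j, by simpa using this⟩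
  refine Module.End.isNilpotent_iff_of_finite.mpr fun w => ?_
  have hw : w ∈ (LieAlgebra.ad F L v).maxGenEigenspace 0 :=
    iSup_le hE (Module.End.iSup_maxGenEigenspace_eq_top P ▸ Submodule.mem_top)
  simpa using hw

end Leibniz

section LieModule

open LieModule

variable {K L M : Type*} [Field K] [LieRing L] [LieAlgebra K L] [AddCommGroup M] [Module K M]
  [LieRingModule L M] [LieModule K L M]

theorem LieModule.apply_eq_zero_of_isNilpotent_toEnd {χ : L → K} [Nontrivial (weightSpace M χ)]
    {x : L} (hx : _root_.IsNilpotent (toEnd K L M x)) : χ x = 0 := by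
  obtain ⟨⟨m, hm⟩, hm0⟩ := exists_ne (0 : weightSpace M χ)
  have : (toEnd K L M x).HasEigenvalue (χ x) :=
    Module.End.hasEigenvalue_of_hasEigenvector
      ⟨Module.End.mem_eigenspace_iff.mpr ((mem_weightSpace χ m).mp hm x), by simpa using hm0⟩
  exact (this.isNilpotent_of_isNilpotent hx).eq_zero

theorem LieModule.isNilpotent_of_forall_isNilpotent_toEnd_of_span_eq_top [CharZero K]
    [IsAlgClosed K] [LieAlgebra.IsSolvable L] [FiniteDimensional K M] {S : Set L}
    (hS : Submodule.span K S = ⊤) (hSM : ∀ x ∈ S, _root_.IsNilpotent (toEnd K L M x)) :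
    IsNilpotent L M := by
  induction h : Module.finrank K M using Nat.strong_induction_on generalizing M with
  | _ n ih =>
  rcases subsingleton_or_nontrivial M with hM | hM
  · infer_instance
  obtain ⟨χ, hχ⟩ := exists_nontrivial_weightSpace_of_isSolvable K L M
  obtain rfl : χ = 0 :=
    LinearMap.ext_on hS fun x hx => apply_eq_zero_of_isNilpotent_toEnd (hSM x hx)
  set N := maxTrivSubmodule K L M
  have hN : weightSpace M (0 : Module.Dual K L) ≤ N := fun m hm => by
    simpa [N] using (mem_weightSpace _ m).mp hm
  have hNpos : 0 < Module.finrank K N := by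
    have : Nontrivial N := (LieSubmodule.nontrivial_iff_ne_bot K L M).mpr fun hbot =>
      (LieSubmodule.nontrivial_iff_ne_bot K L M).mp hχ (eq_bot_iff.mpr (hbot ▸ hN))
    exact Module.finrank_pos
  have hlt : Module.finrank K (M ⧸ N) < n := by
    have : Module.finrank K (M ⧸ N) + Module.finrank K N = n :=
      h ▸ N.toSubmodule.finrank_quotient_add_finrank
    omega
  have hq : ∀ x ∈ S, _root_.IsNilpotent (toEnd K L (M ⧸ N) x) := fun x hx =>
    Module.End.IsNilpotent.mapQ (fun _ hm => N.lie_mem hm) (hSM x hx)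
  exact nilpotentOfNilpotentQuotient K L M le_rfl (ih _ hlt hq rfl)

end LieModule

theorem solvable_with_invertible_leibnizDerivation_nilpotent
    {F L : Type*} [Field F] [CharZero F] [IsAlgClosed F] [LieRing L] [LieAlgebra F L]
    [FiniteDimensional F L] [LieAlgebra.IsSolvable L]
    {k : ℕ} (hk : 1 ≤ k) (P : L →ₗ[F] L) (hP : IsLeibnizDerivation k P)
    (hinv : Function.Bijective P) :
    LieModule.IsNilpotent L L := by
  refine LieModule.isNilpotent_of_forall_isNilpotent_toEnd_of_span_eq_top (K := F)
    (S := ⋃ μ, (Module.End.maxGenEigenspace P μ : Set L)) ?_ ?_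
  · rw [Submodule.span_iUnion]
    simpa using Module.End.iSup_maxGenEigenspace_eq_top P
  · simp only [Set.mem_iUnion, SetLike.mem_coe, forall_exists_index]
    exact fun v μ hv =>
      hP.isNilpotent_ad_of_mem_maxGenEigenspace (Nat.one_le_iff_ne_zero.mp hk) hinv.injective hv
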